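/- Let D_i = {(p^k, x_i^k)}_{k=1}^{K}, i ∈ N, be a group dataset in which all agents face the same number K of observations with common, strictly positive prices p^k ∈ ℝ^m_{++}, and suppose there is an agent i* with x_{i*}^l < Σ_{i∈N} x_i^k (componentwise ≤ and ≠) for all k, l ∈ {1,…,K}. Let D_a = {(p^k, Σ_{i∈N} x_i^k)}_{k=1}^K be the aggregate dataset. Then D_a and every D_i are rationalizable if and only if there exist increasing, concave, continuous utilities u_i rationalizing D_i for each i ∈ N and v rationalizing D_a such that for every strictly positive price p ∈ ℝ^m_{++} and income I > 0 there exist bundles (x_i)_{i∈N} in ℝ^m_+ with (1) Σ_i x_i ∈ argmax{ v(z) : z ∈ ℝ^m_+, p·z ≤ I } and (2) x_i ∈ argmax{ u_i(z) : z ∈ ℝ^m_+, p·z ≤ p·x_i } for every i. -/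

import Mathlib

/-!
Any rationalization `u`, evaluated at the observed bundles, gives numbers `φ t = u (y t)` that
order the observations as revealed preference does. Peeling off the observations of least `φ`
one level at a time produces Afriat numbers `U t` and `L t > 0`, and the lower envelope of the
affine functions `z ↦ U t + L t * (q t ⬝ z - q t ⬝ y t)` is a concave, continuous
rationalization. Every bundle of agent `i*` is strictly cheaper than every aggregate bundle, so
lifting the aggregate potentials above those of `i*` gives a potential of the merged dataset,
hence one concave utility `w` rationalizing both. With `v = u i* = w`, the whole aggregate demand
goes to `i*`; every other agent gets `0`, whose budget set is `{0}`.
-/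

open Finset

/-- The dot product of two vectors in `ℝ^m`. -/
def dot {m : ℕ} (p x : Fin m → ℝ) : ℝ := ∑ j, p j * x j

/-- `x ≪ y`: strictly smaller in every component. -/
def StrLt {m : ℕ} (x y : Fin m → ℝ) : Prop := ∀ j, x j < y j

/-- An increasing utility on the nonnegative orthant. -/
def Incr {m : ℕ} (u : (Fin m → ℝ) → ℝ) : Prop :=
  (∀ x y : Fin m → ℝ, 0 ≤ x → x ≤ y → u x ≤ u y) ∧
  (∀ x y : Fin m → ℝ, 0 ≤ x → StrLt x y → u x < u y)

/-- `u` rationalizes the individual dataset `{(p k, x k)}` : `u` is increasing and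
any bundle strictly better than `x k` is more expensive at prices `p k`. -/
def Rationalizes {m K : ℕ} (p x : Fin K → Fin m → ℝ) (u : (Fin m → ℝ) → ℝ) : Prop :=
  Incr u ∧ ∀ k, ∀ z : Fin m → ℝ, 0 ≤ z → u (x k) < u z → dot (p k) (x k) < dot (p k) z

/-- Direct revealed preference. -/
def RP {m K : ℕ} (p x : Fin K → Fin m → ℝ) (a b : Fin m → ℝ) : Prop :=
  0 ≤ a ∧ 0 ≤ b ∧ (a = b ∨ ∃ k, x k ≤ a ∧ dot (p k) b ≤ dot (p k) (x k))

/-- Direct strict revealed preference. -/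
def SRP {m K : ℕ} (p x : Fin K → Fin m → ℝ) (a b : Fin m → ℝ) : Prop :=
  0 ≤ a ∧ 0 ≤ b ∧
    ((∃ a', StrLt a' a ∧ RP p x a' b) ∨ ∃ k, x k ≤ a ∧ dot (p k) b < dot (p k) (x k))

/-- Indirect revealed preference: the transitive closure of `RP`. -/
def IRP {m K : ℕ} (p x : Fin K → Fin m → ℝ) : (Fin m → ℝ) → (Fin m → ℝ) → Prop :=
  Relation.TransGen (RP p x)

/-- Indirect strict revealed preference: a finite `RP`-chain with at least one strict link. -/
def SIRP {m K : ℕ} (p x : Fin K → Fin m → ℝ) (a b : Fin m → ℝ) : Prop :=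
  ∃ c d, Relation.ReflTransGen (RP p x) a c ∧ SRP p x c d ∧ Relation.ReflTransGen (RP p x) d b

open Filter

lemma ConcaveOn.finset_inf' {E T : Type*} [AddCommGroup E] [Module ℝ E] {s : Set E}
    {S : Finset T} (hS : S.Nonempty) {f : T → E → ℝ} (hf : ∀ t ∈ S, ConcaveOn ℝ s (f t)) :
    ConcaveOn ℝ s fun z => S.inf' hS (f · z) := by
  obtain ⟨t₀, ht₀⟩ := hS
  refine ⟨(hf t₀ ht₀).1, fun x hx y hy a b ha hb hab => le_inf' _ _ fun t ht => ?_⟩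
  calc a • S.inf' _ (f · x) + b • S.inf' _ (f · y) ≤ a • f t x + b • f t y := by
        gcongr <;> exact inf'_le _ ht
    _ ≤ f t (a • x + b • y) := (hf t ht).2 hx hy ha hb hab

variable {m : ℕ}

section Dot

lemma continuous_dot (p : Fin m → ℝ) : Continuous (dot p) :=
  continuous_const.dotProduct continuous_id

lemma dot_add (p x y : Fin m → ℝ) : dot p (x + y) = dot p x + dot p y :=
  dotProduct_add p x y

lemma dot_smul (p x : Fin m → ℝ) (c : ℝ) : dot p (c • x) = c * dot p x :=
  dotProduct_smul c p x

lemma dot_zero (p : Fin m → ℝ) : dot p 0 = 0 :=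
  dotProduct_zero p

lemma dot_le_dot {p x y : Fin m → ℝ} (hp : 0 ≤ p) (hxy : x ≤ y) : dot p x ≤ dot p y :=
  dotProduct_le_dotProduct_of_nonneg_left hxy hp

lemma StrLt.le {x y : Fin m → ℝ} (h : StrLt x y) : x ≤ y := fun j => (h j).le

lemma dot_lt_dot {p x y : Fin m → ℝ} (hp : StrLt 0 p) (hxy : x ≤ y) (hne : x ≠ y) :
    dot p x < dot p y := by
  obtain ⟨j, hj⟩ : ∃ j, x j < y j := by
    by_contra! h
    exact hne (funext fun j => (hxy j).antisymm (h j))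
  exact Finset.sum_lt_sum (fun j _ => mul_le_mul_of_nonneg_left (hxy j) (hp j).le)
    ⟨j, Finset.mem_univ j, mul_lt_mul_of_pos_left hj (hp j)⟩

lemma dot_lt_dot_of_strLt (hm : 0 < m) {p x y : Fin m → ℝ} (hp : StrLt 0 p) (hxy : StrLt x y) :
    dot p x < dot p y :=
  dot_lt_dot hp hxy.le fun h => (hxy ⟨0, hm⟩).ne (congrFun h _)

lemma eq_zero_of_dot_nonpos {p z : Fin m → ℝ} (hp : StrLt 0 p) (hz : 0 ≤ z)
    (h : dot p z ≤ 0) : z = 0 := by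
  by_contra hne
  exact h.not_gt (dot_zero p ▸ dot_lt_dot hp hz (Ne.symm hne))

lemma incr_dot (hm : 0 < m) {p : Fin m → ℝ} (hp : StrLt 0 p) : Incr (dot p) :=
  ⟨fun _ _ _ h => dot_le_dot hp.le h, fun _ _ _ h => dot_lt_dot_of_strLt hm hp h⟩

lemma concaveOn_dot (p : Fin m → ℝ) {s : Set (Fin m → ℝ)} (hs : Convex ℝ s) :
    ConcaveOn ℝ s (dot p) :=
  ⟨hs, fun x _ y _ a b _ _ _ => by simp only [dot_add, dot_smul, smul_eq_mul, le_refl]⟩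

lemma concaveOn_const_add_mul_dot_sub (p : Fin m → ℝ) (c r d : ℝ) :
    ConcaveOn ℝ Set.univ fun z => c + r * (dot p z - d) :=
  ⟨convex_univ, fun x _ y _ a b _ _ hab => le_of_eq <| by
    simp only [dot_add, dot_smul, smul_eq_mul]
    linear_combination (c - r * d) * hab⟩

end Dot

lemma Incr.dim_pos {u : (Fin m → ℝ) → ℝ} (hu : Incr u) : 0 < m := by
  by_contra! h
  have hstr : StrLt (0 : Fin m → ℝ) 0 := fun j => absurd j.2 (by omega)
  exact (hu.2 0 0 le_rfl hstr).false

/-- `Rationalizes` for observations indexed by an arbitrary type `T`; for `T = Fin K` the two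
coincide definitionally. -/
def RationalizesData {T : Type*} (q y : T → Fin m → ℝ) (u : (Fin m → ℝ) → ℝ) : Prop :=
  Incr u ∧ ∀ t, ∀ z : Fin m → ℝ, 0 ≤ z → u (y t) < u z → dot (q t) (y t) < dot (q t) z

/-- `φ` orders the observations as revealed preference does. -/
def IsPotential {T : Type*} (q y : T → Fin m → ℝ) (φ : T → ℝ) : Prop :=
  (∀ s t, dot (q s) (y t) ≤ dot (q s) (y s) → φ t ≤ φ s) ∧
  (∀ s t, dot (q s) (y t) < dot (q s) (y s) → φ t < φ s)

namespace RationalizesData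

variable {T : Type*} {q y : T → Fin m → ℝ} {u : (Fin m → ℝ) → ℝ}

lemma le_of_dot_le (hu : RationalizesData q y u) {t : T} {z : Fin m → ℝ} (hz : 0 ≤ z)
    (h : dot (q t) z ≤ dot (q t) (y t)) : u z ≤ u (y t) :=
  not_lt.1 fun hlt => (hu.2 t z hz hlt).not_ge h

/-- A bundle strictly inside the budget can be raised in every coordinate while staying
affordable, so it is strictly worse. -/
lemma lt_of_dot_lt (hu : RationalizesData q y u) {t : T} {z : Fin m → ℝ} (hz : 0 ≤ z)
    (h : dot (q t) z < dot (q t) (y t)) : u z < u (y t) := by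
  obtain ⟨ε, hε, hεlt⟩ := exists_pos_mul_lt (sub_pos.2 h) (dot (q t) 1)
  have hzε : StrLt z (z + ε • 1) := fun j => by simp [hε]
  have hcost : dot (q t) (z + ε • 1) ≤ dot (q t) (y t) := by
    rw [dot_add, dot_smul]
    linarith
  exact (hu.1.2 _ _ hz hzε).trans_le (hu.le_of_dot_le (hz.trans hzε.le) hcost)

lemma isPotential (hu : RationalizesData q y u) (hy : ∀ t, 0 ≤ y t) :
    IsPotential q y (fun t => u (y t)) :=
  ⟨fun _ t h => hu.le_of_dot_le (hy t) h, fun _ t h => hu.lt_of_dot_lt (hy t) h⟩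

end RationalizesData

section Afriat

variable {T : Type*}

/-- Inductive step of Afriat's construction: the block `C` gets a common level below everything
in `S` and a slope steep enough to reach `S`. -/
lemma exists_afriat_numbers_union [DecidableEq T] {a : T → T → ℝ} {S C : Finset T}
    (hC : ∀ t ∈ C, ∀ s ∈ C, 0 ≤ a t s) (hCS : ∀ t ∈ C, ∀ s ∈ S, 0 < a t s)
    {U₀ L₀ : T → ℝ} (hL₀ : ∀ t, 0 < L₀ t) (hS : ∀ s ∈ S, ∀ t ∈ S, U₀ s ≤ U₀ t + L₀ t * a t s) :
    ∃ U L : T → ℝ, (∀ t, 0 < L t) ∧ ∀ s ∈ S ∪ C, ∀ t ∈ S ∪ C, U s ≤ U t + L t * a t s := by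
  obtain ⟨c, hc⟩ : ∃ c, ∀ t ∈ S, ∀ s ∈ C, c ≤ U₀ t + L₀ t * a t s :=
    ((eventually_all_finset S).2 fun t _ =>
      (eventually_all_finset C).2 fun s _ => eventually_le_atBot _).exists
  obtain ⟨L, hL, hLc⟩ : ∃ L, 0 < L ∧ ∀ t ∈ C, ∀ s ∈ S, U₀ s ≤ c + L * a t s :=
    ((eventually_gt_atTop 0).and ((eventually_all_finset C).2 fun t ht =>
      (eventually_all_finset S).2 fun s hs =>
        (tendsto_atTop_add_const_left _ c
          (tendsto_id.atTop_mul_const (hCS t ht s hs))).eventually_ge_atTop (U₀ s))).exists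
  refine ⟨fun t => if t ∈ S then U₀ t else c, fun t => if t ∈ S then L₀ t else L,
    fun t => by dsimp only; split_ifs <;> simp [hL₀, hL], fun s hs t ht => ?_⟩
  have hCs (hsS : s ∉ S) : s ∈ C := (mem_union.1 hs).resolve_left hsS
  have hCt (htS : t ∉ S) : t ∈ C := (mem_union.1 ht).resolve_left htS
  by_cases htS : t ∈ S <;> by_cases hsS : s ∈ S <;> simp only [htS, hsS, if_true, if_false]
  · exact hS s hsS t htS
  · exact hc t htS s (hCs hsS)
  · exact hLc t (hCt htS) s hsS
  · exact le_add_of_nonneg_right (mul_nonneg hL.le (hC t (hCt htS) s (hCs hsS)))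

/-- Afriat numbers `U t`, `L t > 0` from a potential `φ` of the "cost differences" `a`:
peel off the observations of least potential and recurse. -/
lemma exists_afriat_numbers [Fintype T] {a : T → T → ℝ} {φ : T → ℝ}
    (hle : ∀ t s, a t s ≤ 0 → φ s ≤ φ t) (hlt : ∀ t s, a t s < 0 → φ s < φ t) :
    ∃ U L : T → ℝ, (∀ t, 0 < L t) ∧ ∀ s t, U s ≤ U t + L t * a t s := by
  classical
  suffices h : ∀ S : Finset T, ∃ U L : T → ℝ, (∀ t, 0 < L t) ∧
      ∀ s ∈ S, ∀ t ∈ S, U s ≤ U t + L t * a t s by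
    obtain ⟨U, L, hL, hUL⟩ := h univ
    exact ⟨U, L, hL, fun s t => hUL s (mem_univ s) t (mem_univ t)⟩
  intro S
  induction S using Finset.strongInduction with
  | H S ih =>
  rcases S.eq_empty_or_nonempty with rfl | hS
  · exact ⟨0, 1, fun _ => one_pos, by simp⟩
  set C := S.filter fun t => ∀ s ∈ S, φ t ≤ φ s
  have hCS : C ⊆ S := filter_subset _ _
  have hCne : C.Nonempty := by
    obtain ⟨t, ht, hmin⟩ := S.exists_min_image φ hS
    exact ⟨t, mem_filter.2 ⟨ht, hmin⟩⟩
  obtain ⟨U₀, L₀, hL₀, hU₀⟩ := ih (S \ C) (sdiff_ssubset hCS hCne)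
  have hmin {t} (ht : t ∈ C) : ∀ s ∈ S, φ t ≤ φ s := (mem_filter.1 ht).2
  have hCC : ∀ t ∈ C, ∀ s ∈ C, 0 ≤ a t s := fun t ht s hs =>
    not_lt.1 fun h => (hlt t s h).not_ge (hmin ht s (hCS hs))
  have hCrest : ∀ t ∈ C, ∀ s ∈ S \ C, 0 < a t s := by
    intro t ht s hs
    obtain ⟨hsS, hsC⟩ := mem_sdiff.1 hs
    obtain ⟨r, hrS, hrs⟩ : ∃ r ∈ S, φ r < φ s := by
      simpa [C, hsS] using hsC
    exact not_le.1 fun h => (hle t s h).not_gt ((hmin ht r hrS).trans_lt hrs)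
  simpa [sdiff_union_of_subset hCS] using
    exists_afriat_numbers_union hCC hCrest hL₀ hU₀

end Afriat

section AfriatUtility

variable {T : Type*} [Fintype T] [Nonempty T] {q y : T → Fin m → ℝ} {U L : T → ℝ}

noncomputable def afriatUtility (q y : T → Fin m → ℝ) (U L : T → ℝ) (z : Fin m → ℝ) : ℝ :=
  univ.inf' univ_nonempty fun t => U t + L t * (dot (q t) z - dot (q t) (y t))

lemma afriatUtility_le (t : T) (z : Fin m → ℝ) :
    afriatUtility q y U L z ≤ U t + L t * (dot (q t) z - dot (q t) (y t)) :=
  inf'_le _ (mem_univ t)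

lemma afriatUtility_apply_obs (hUL : ∀ s t, U s ≤ U t + L t * (dot (q t) (y s) - dot (q t) (y t)))
    (s : T) : afriatUtility q y U L (y s) = U s :=
  le_antisymm (by simpa using afriatUtility_le (q := q) (y := y) (L := L) s (y s))
    (le_inf' _ _ fun t _ => hUL s t)

lemma concaveOn_afriatUtility : ConcaveOn ℝ Set.univ (afriatUtility q y U L) :=
  ConcaveOn.finset_inf' _ fun _ _ => concaveOn_const_add_mul_dot_sub _ _ _ _

lemma continuous_afriatUtility : Continuous (afriatUtility q y U L) :=
  Continuous.finset_inf'_apply _ fun _ _ =>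
    continuous_const.add (continuous_const.mul ((continuous_dot _).sub continuous_const))

lemma incr_afriatUtility (hm : 0 < m) (hq : ∀ t, StrLt 0 (q t)) (hL : ∀ t, 0 < L t) :
    Incr (afriatUtility q y U L) := by
  refine ⟨fun x x' _ hxx' => le_inf' _ _ fun t _ => (afriatUtility_le t x).trans ?_,
    fun x x' _ hxx' => ?_⟩
  · gcongr
    · exact (hL t).le
    · exact dot_le_dot (hq t).le hxx'
  · obtain ⟨t, -, ht⟩ := exists_mem_eq_inf' univ_nonempty
      fun t => U t + L t * (dot (q t) x' - dot (q t) (y t))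
    refine (afriatUtility_le t x).trans_lt ?_
    rw [afriatUtility, ht]
    gcongr
    · exact hL t
    · exact dot_lt_dot_of_strLt hm (hq t) hxx'

lemma rationalizesData_afriatUtility (hm : 0 < m) (hq : ∀ t, StrLt 0 (q t)) (hL : ∀ t, 0 < L t)
    (hUL : ∀ s t, U s ≤ U t + L t * (dot (q t) (y s) - dot (q t) (y t))) :
    RationalizesData q y (afriatUtility q y U L) := by
  refine ⟨incr_afriatUtility hm hq hL, fun t z _ hlt => not_le.1 fun hz => hlt.not_ge ?_⟩
  rw [afriatUtility_apply_obs hUL]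
  exact (afriatUtility_le t z).trans
    (add_le_of_nonpos_right (mul_nonpos_of_nonneg_of_nonpos (hL t).le (sub_nonpos.2 hz)))

end AfriatUtility

section Potential

variable {T T' : Type*} {q y : T → Fin m → ℝ} {q' y' : T' → Fin m → ℝ} {φ : T → ℝ} {φ' : T' → ℝ}

lemma IsPotential.add_const (hφ : IsPotential q y φ) (c : ℝ) :
    IsPotential q y fun t => φ t + c :=
  ⟨fun s t h => by simpa using hφ.1 s t h, fun s t h => by simpa using hφ.2 s t h⟩

lemma IsPotential.sum_elim (hφ : IsPotential q y φ) (hφ' : IsPotential q' y' φ')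
    (hdom : ∀ t t', φ' t' < φ t) (hcross : ∀ t' t, dot (q' t') (y' t') < dot (q' t') (y t)) :
    IsPotential (Sum.elim q q') (Sum.elim y y') (Sum.elim φ φ') := by
  constructor
  · rintro (s | s) (t | t) h
    · exact hφ.1 s t h
    · exact (hdom s t).le
    · exact absurd h (hcross s t).not_ge
    · exact hφ'.1 s t h
  · rintro (s | s) (t | t) h
    · exact hφ.2 s t h
    · exact hdom s t
    · exact absurd h.le (hcross s t).not_ge
    · exact hφ'.2 s t h

lemma IsPotential.exists_concaveOn_rationalizesData [Fintype T] (hm : 0 < m)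
    (hq : ∀ t, StrLt 0 (q t)) (hφ : IsPotential q y φ) :
    ∃ u : (Fin m → ℝ) → ℝ, ConcaveOn ℝ {z | 0 ≤ z} u ∧ ContinuousOn u {z | 0 ≤ z} ∧
      RationalizesData q y u := by
  cases isEmpty_or_nonempty T
  · exact ⟨dot 1, concaveOn_dot 1 (convex_Ici 0), (continuous_dot 1).continuousOn,
      incr_dot hm fun _ => one_pos, isEmptyElim⟩
  obtain ⟨U, L, hL, hUL⟩ := exists_afriat_numbers
    (a := fun t s => dot (q t) (y s) - dot (q t) (y t))
    (fun t s h => hφ.1 t s (sub_nonpos.1 h)) (fun t s h => hφ.2 t s (sub_neg.1 h))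
  exact ⟨afriatUtility q y U L, concaveOn_afriatUtility.subset (Set.subset_univ _) (convex_Ici 0),
    continuous_afriatUtility.continuousOn, rationalizesData_afriatUtility hm hq hL hUL⟩

end Potential

namespace RationalizesData

variable {T T' : Type*} [Fintype T] [Fintype T'] {q y : T → Fin m → ℝ} {q' y' : T' → Fin m → ℝ}
  {u u' : (Fin m → ℝ) → ℝ}

lemma exists_concaveOn (hu : RationalizesData q y u) (hq : ∀ t, StrLt 0 (q t))
    (hy : ∀ t, 0 ≤ y t) :
    ∃ w : (Fin m → ℝ) → ℝ, ConcaveOn ℝ {z | 0 ≤ z} w ∧ ContinuousOn w {z | 0 ≤ z} ∧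
      RationalizesData q y w :=
  (hu.isPotential hy).exists_concaveOn_rationalizesData hu.1.dim_pos hq

lemma exists_concaveOn_of_cheaper (hu : RationalizesData q y u) (hu' : RationalizesData q' y' u')
    (hq : ∀ t, StrLt 0 (q t)) (hq' : ∀ t', StrLt 0 (q' t')) (hy : ∀ t, 0 ≤ y t)
    (hy' : ∀ t', 0 ≤ y' t') (hcross : ∀ t' t, dot (q' t') (y' t') < dot (q' t') (y t)) :
    ∃ w : (Fin m → ℝ) → ℝ, ConcaveOn ℝ {z | 0 ≤ z} w ∧ ContinuousOn w {z | 0 ≤ z} ∧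
      RationalizesData q y w ∧ RationalizesData q' y' w := by
  obtain ⟨c, hc⟩ : ∃ c, ∀ t t', u' (y' t') < u (y t) + c :=
    (eventually_all.2 fun t => eventually_all.2 fun t' =>
      (tendsto_atTop_add_const_left _ _ tendsto_id).eventually_gt_atTop _).exists
  obtain ⟨w, hwc, hwct, hw⟩ :=
    (((hu.isPotential hy).add_const c).sum_elim (hu'.isPotential hy') hc
      hcross).exists_concaveOn_rationalizesData hu.1.dim_pos (Sum.forall.2 ⟨hq, hq'⟩)
  exact ⟨w, hwc, hwct, ⟨hw.1, fun t => hw.2 (.inl t)⟩, ⟨hw.1, fun t => hw.2 (.inr t)⟩⟩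

end RationalizesData

lemma isCompact_budget {pr : Fin m → ℝ} (hpr : StrLt 0 pr) (I : ℝ) :
    IsCompact {z : Fin m → ℝ | 0 ≤ z ∧ dot pr z ≤ I} := by
  refine (isCompact_Icc (a := 0) (b := fun j => I / pr j)).of_isClosed_subset
    (isClosed_Ici.inter (isClosed_le (continuous_dot pr) continuous_const))
    fun z ⟨hz, hzI⟩ => ⟨hz, fun j => ?_⟩
  rw [le_div_iff₀ (hpr j), mul_comm]
  exact (single_le_sum (fun j _ => mul_nonneg (hpr j).le (hz j)) (mem_univ j)).trans hzI

lemma exists_budget_maximizer {v : (Fin m → ℝ) → ℝ} (hv : ContinuousOn v {z | 0 ≤ z})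
    {pr : Fin m → ℝ} (hpr : StrLt 0 pr) {I : ℝ} (hI : 0 ≤ I) :
    ∃ X : Fin m → ℝ, 0 ≤ X ∧ dot pr X ≤ I ∧ ∀ z, 0 ≤ z → dot pr z ≤ I → v z ≤ v X := by
  obtain ⟨X, ⟨hX, hXI⟩, hmax⟩ := (isCompact_budget hpr I).exists_isMaxOn
    ⟨0, le_rfl, by rwa [dot_zero]⟩ (hv.mono fun _ hz => hz.1)
  exact ⟨X, hX, hXI, fun z hz hzI => hmax ⟨hz, hzI⟩⟩

lemma exists_demand_of_single_agent {ι : Type*} [Fintype ι] [DecidableEq ι]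
    {u : ι → (Fin m → ℝ) → ℝ} (i₀ : ι) (hu : ContinuousOn (u i₀) {z | 0 ≤ z})
    {pr : Fin m → ℝ} (hpr : StrLt 0 pr) {I : ℝ} (hI : 0 ≤ I) :
    ∃ xx : ι → Fin m → ℝ, (∀ i, 0 ≤ xx i) ∧
      (dot pr (∑ i, xx i) ≤ I ∧ ∀ z, 0 ≤ z → dot pr z ≤ I → u i₀ z ≤ u i₀ (∑ i, xx i)) ∧
      ∀ i z, 0 ≤ z → dot pr z ≤ dot pr (xx i) → u i z ≤ u i (xx i) := by
  obtain ⟨X, hX, hXI, hmax⟩ := exists_budget_maximizer hu hpr hI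
  refine ⟨Pi.single i₀ X, fun i => ?_, by simpa using ⟨hXI, hmax⟩, fun i z hz hzb => ?_⟩
  · rcases eq_or_ne i i₀ with rfl | hi
    · simpa using hX
    · simp [hi]
  · rcases eq_or_ne i i₀ with rfl | hi
    · simpa using hmax z hz (by simpa using hzb.trans (by simpa using hXI))
    · rw [Pi.single_eq_of_ne hi] at hzb ⊢
      rw [eq_zero_of_dot_nonpos hpr hz (hzb.trans_eq (dot_zero pr))]

theorem stmt11_general {m : ℕ} {ι : Type} [Fintype ι]
    (K : ℕ) (p : Fin K → Fin m → ℝ) (hp : ∀ k, StrLt 0 (p k))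
    (x : ι → Fin K → Fin m → ℝ) (hx : ∀ i k, 0 ≤ x i k)
    (istar : ι)
    (hsmall : ∀ k l, x istar l ≤ (∑ i, x i k) ∧ x istar l ≠ (∑ i, x i k)) :
    ((∃ v : (Fin m → ℝ) → ℝ, Rationalizes p (fun k => ∑ i, x i k) v) ∧
      (∀ i, ∃ u : (Fin m → ℝ) → ℝ, Rationalizes p (x i) u))
    ↔ ∃ (u : ι → (Fin m → ℝ) → ℝ) (v : (Fin m → ℝ) → ℝ),
        (∀ i, ConcaveOn ℝ {z : Fin m → ℝ | 0 ≤ z} (u i) ∧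
          ContinuousOn (u i) {z : Fin m → ℝ | 0 ≤ z} ∧ Rationalizes p (x i) (u i)) ∧
        (ConcaveOn ℝ {z : Fin m → ℝ | 0 ≤ z} v ∧
          ContinuousOn v {z : Fin m → ℝ | 0 ≤ z} ∧ Rationalizes p (fun k => ∑ i, x i k) v) ∧
        (∀ pr : Fin m → ℝ, StrLt 0 pr → ∀ I : ℝ, 0 < I →
          ∃ xx : ι → Fin m → ℝ, (∀ i, 0 ≤ xx i) ∧
            (dot pr (∑ i, xx i) ≤ I ∧
              ∀ z : Fin m → ℝ, 0 ≤ z → dot pr z ≤ I → v z ≤ v (∑ i, xx i)) ∧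
            (∀ i, ∀ z : Fin m → ℝ, 0 ≤ z → dot pr z ≤ dot pr (xx i) →
              u i z ≤ u i (xx i))) := by
  classical
  refine ⟨fun ⟨⟨v₀, hv₀⟩, hu₀⟩ => ?_,
    fun ⟨u, v, hu, hv, _⟩ => ⟨⟨v, hv.2.2⟩, fun i => ⟨u i, (hu i).2.2⟩⟩⟩
  choose u₀ hu₀ using hu₀
  choose u hu using fun i => RationalizesData.exists_concaveOn (hu₀ i) hp (hx i)
  obtain ⟨w, hwc, hwct, hwagg, hwstar⟩ := RationalizesData.exists_concaveOn_of_cheaper hv₀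
    (hu₀ istar) hp hp (fun k => sum_nonneg fun i _ => hx i k) (hx istar)
    fun l k => dot_lt_dot (hp l) (hsmall k l).1 (hsmall k l).2
  refine ⟨Function.update u istar w, w, fun i => ?_, ⟨hwc, hwct, hwagg⟩, fun pr hpr I hI => ?_⟩
  · rcases eq_or_ne i istar with rfl | hi
    · rw [Function.update_self]
      exact ⟨hwc, hwct, hwstar⟩
    · rw [Function.update_of_ne hi]
      exact hu i
  · simpa using exists_demand_of_single_agent (u := Function.update u istar w) istar
      (by simpa using hwct) hpr hI.le

/-- A group dataset with common strictly positive prices and a "small"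
agent `istar` admits rationalizations of the individual datasets and of the aggregate
dataset if and only if there are increasing, concave, continuous rationalizing utilities
`u i` and an aggregate utility `v` such that at every strictly positive price and income
there is an (endogenous-income) distribution of demand: the aggregate demand maximizes `v`
on the aggregate budget and each `x i` maximizes `u i` on the budget it spans. -/
theorem stmt11 {m : ℕ} (hm : 0 < m) {ι : Type} [Fintype ι]
    (K : ℕ) (p : Fin K → Fin m → ℝ) (hp : ∀ k, StrLt 0 (p k))
    (x : ι → Fin K → Fin m → ℝ) (hx : ∀ i k, 0 ≤ x i k)
    (istar : ι)
    (hsmall : ∀ k l, x istar l ≤ (∑ i, x i k) ∧ x istar l ≠ (∑ i, x i k)) :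
    ((∃ v : (Fin m → ℝ) → ℝ, Rationalizes p (fun k => ∑ i, x i k) v) ∧
      (∀ i, ∃ u : (Fin m → ℝ) → ℝ, Rationalizes p (x i) u))
    ↔ ∃ (u : ι → (Fin m → ℝ) → ℝ) (v : (Fin m → ℝ) → ℝ),
        (∀ i, ConcaveOn ℝ {z : Fin m → ℝ | 0 ≤ z} (u i) ∧
          ContinuousOn (u i) {z : Fin m → ℝ | 0 ≤ z} ∧ Rationalizes p (x i) (u i)) ∧
        (ConcaveOn ℝ {z : Fin m → ℝ | 0 ≤ z} v ∧
          ContinuousOn v {z : Fin m → ℝ | 0 ≤ z} ∧ Rationalizes p (fun k => ∑ i, x i k) v) ∧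
        (∀ pr : Fin m → ℝ, StrLt 0 pr → ∀ I : ℝ, 0 < I →
          ∃ xx : ι → Fin m → ℝ, (∀ i, 0 ≤ xx i) ∧
            (dot pr (∑ i, xx i) ≤ I ∧
              ∀ z : Fin m → ℝ, 0 ≤ z → dot pr z ≤ I → v z ≤ v (∑ i, xx i)) ∧
            (∀ i, ∀ z : Fin m → ℝ, 0 ≤ z → dot pr z ≤ dot pr (xx i) →
              u i z ≤ u i (xx i))) :=
  stmt11_general K p hp x hx istar hsmall
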